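/- arXiv:1401.0493 — 2 statements merged into one kernel-verified Lean document; each statement's English description precedes it below -/
import Mathlib

section
/- Let p be a prime with p ≡ 1 (mod 4) and let q ≡ 3 (mod 8) be an integer with p ∤ q. Suppose p = c² + d² and 4p = x² + q·y² with c, d, x, y integers. Then gcd(q·y, x + 2d) = 1 and gcd(q·y², 4c² + (x+2d)²) = 1, provided gcd(c, x+2d) = 1 and y is odd. -/
/-! Put `N = q y²` and `m = x + 2d`. The identity `N = 4c² + m (2d - x)` together with `N` odd
forces `m` odd, so `gcd(c, m) = 1` gives `gcd(N, m) = 1`, hence `gcd(q y, m) = 1`. Next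
`4c² + m² = N + 2 m x`, so it remains to see that `N` is prime to `x`. As `x² ≡ 4p (mod N)`, this
amounts to `p ∤ N`; but `p ∣ N` with `p ∤ q` gives `p ∣ y`, then `p ∣ x`, so `p² ∣ 4p`
and `p ∣ 4`, impossible for a divisor of the odd `N`. -/

theorem Int.dvd_four_of_dvd_mul_sq {p q x y : ℤ} (hp : Prime p) (hpq : ¬ p ∣ q)
    (h : 4 * p = x ^ 2 + q * y ^ 2) (hdvd : p ∣ q * y ^ 2) : p ∣ 4 := by
  have hy : p ∣ y := hp.dvd_of_dvd_pow ((hp.dvd_or_dvd hdvd).resolve_left hpq)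
  have hx : p ∣ x := hp.dvd_of_dvd_pow (by
    have : p ∣ 4 * p - q * y ^ 2 := dvd_sub (dvd_mul_left p 4) hdvd
    rwa [h, add_sub_cancel_right] at this)
  have hsq : p * p ∣ p * 4 := by
    rw [mul_comm p 4, h]
    exact dvd_add (pow_two x ▸ mul_dvd_mul hx hx)
      ((pow_two y ▸ mul_dvd_mul hy hy).mul_left q)
  exact (mul_dvd_mul_iff_left hp.ne_zero).1 hsq

theorem Int.isCoprime_of_eq_four_mul_sq_add_mul {n c m k : ℤ} (hn : Odd n)
    (hcm : IsCoprime c m) (h : n = 4 * c ^ 2 + m * k) : IsCoprime n m := by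
  have hm : Odd m := by
    have : Odd (m * k) := by
      rw [show m * k = n + 2 * (-2 * c ^ 2) by rw [h]; ring]
      exact hn.add_even (even_two_mul _)
    exact (Int.odd_mul.1 this).1
  have h4 : IsCoprime (4 : ℤ) m := by
    rw [show (4 : ℤ) = 2 ^ 2 by norm_num]
    exact (Int.isCoprime_two_left.2 hm).pow_left
  rw [h, IsCoprime.add_mul_left_left_iff]
  exact h4.mul_left hcm.pow_left

theorem Int.isCoprime_of_four_mul_eq_sq_add_mul_sq {p q x y : ℤ} (hp : Prime p)
    (hpq : ¬ p ∣ q) (hodd : Odd (q * y ^ 2)) (h : 4 * p = x ^ 2 + q * y ^ 2) :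
    IsCoprime (q * y ^ 2) x := by
  have h4 : IsCoprime (q * y ^ 2) 4 := by
    rw [show (4 : ℤ) = 2 ^ 2 by norm_num]
    exact (Int.isCoprime_two_right.2 hodd).pow_right
  have hpN : IsCoprime (q * y ^ 2) p := ((Prime.coprime_iff_not_dvd hp).2 fun hdvd =>
    hp.not_isUnit (h4.isUnit_of_dvd' hdvd (Int.dvd_four_of_dvd_mul_sq hp hpq h hdvd))).symm
  rw [← IsCoprime.pow_right_iff two_pos,
    show x ^ 2 = 4 * p + (q * y ^ 2) * (-1) by rw [h]; ring, IsCoprime.add_mul_left_right_iff]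
  exact h4.mul_right hpN

theorem stmt_1_general (p : ℕ) (hp : p.Prime)
    (q c d x y : ℤ) (hq8 : q % 8 = 3) (hpq : ¬ (p : ℤ) ∣ q)
    (hcd : (p : ℤ) = c ^ 2 + d ^ 2) (h : 4 * (p : ℤ) = x ^ 2 + q * y ^ 2)
    (hy : Odd y) (hgcd : Int.gcd c (x + 2 * d) = 1) :
    Int.gcd (q * y) (x + 2 * d) = 1 ∧
      Int.gcd (q * y ^ 2) (4 * c ^ 2 + (x + 2 * d) ^ 2) = 1 := by
  have hodd : Odd (q * y ^ 2) := (Int.odd_iff.2 (by omega)).mul hy.pow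
  have hm : IsCoprime (q * y ^ 2) (x + 2 * d) :=
    Int.isCoprime_of_eq_four_mul_sq_add_mul hodd (Int.isCoprime_iff_gcd_eq_one.2 hgcd)
      (k := 2 * d - x) (by linear_combination 4 * hcd - h)
  have hx : IsCoprime (q * y ^ 2) x :=
    Int.isCoprime_of_four_mul_eq_sq_add_mul_sq (Nat.prime_iff_prime_int.1 hp) hpq hodd h
  rw [← Int.isCoprime_iff_gcd_eq_one, ← Int.isCoprime_iff_gcd_eq_one]
  constructor
  · rw [pow_two, ← mul_assoc] at hm
    exact hm.of_mul_left_left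
  · rw [show 4 * c ^ 2 + (x + 2 * d) ^ 2 = 2 * (x + 2 * d) * x + q * y ^ 2 * 1 by
      linear_combination -(4 * hcd - h), IsCoprime.add_mul_left_right_iff]
    exact ((Int.isCoprime_two_right.2 hodd).mul_right hm).mul_right hx

theorem stmt_1 (p : ℕ) (hp : p.Prime) (hp4 : p % 4 = 1)
    (q c d x y : ℤ) (hq8 : q % 8 = 3) (hpq : ¬ (p : ℤ) ∣ q)
    (hcd : (p : ℤ) = c ^ 2 + d ^ 2) (h : 4 * (p : ℤ) = x ^ 2 + q * y ^ 2)
    (hy : Odd y) (hgcd : Int.gcd c (x + 2 * d) = 1) :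
    Int.gcd (q * y) (x + 2 * d) = 1 ∧
      Int.gcd (q * y ^ 2) (4 * c ^ 2 + (x + 2 * d) ^ 2) = 1 :=
  stmt_1_general p hp q c d x y hq8 hpq hcd h hy hgcd
end

section
/- Let p ≡ 1 (mod 4) be prime with p = c² + d² = x² + 2q·y² for an odd integer q with p ∤ q, where c is odd, d even. Write 2^m ∥ (x+c) (i.e., 2^m exactly divides x+c), d = 2^r·d₀ with d₀ odd, and y = 2^t·y₀ with y₀ odd, and suppose m > r ≥ 2 and p ≡ 1 (mod 8). Then from 2q·y² = d² − (x+c)² + 2c(x+c) and 2^{m+1} ∥ (2q·y² − d²) it follows that m + 1 = min(2t+1, 2r) ≤ 2r, and in particular t > 1. -/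
/-!
Both sides of `2qy² - d² = (x + c)(2c - (x + c))` are written as a power of `2` times an odd
number. On the right, `x + c = 2ᵐa` with `a` odd and `m ≥ 2`, so `2c - (x + c) = 2(c - 2ᵐ⁻¹a)`
contributes exactly one more factor `2`. On the left, `2qy² = 2²ᵗ⁺¹qy₀²` and `d² = 2²ʳd₀²` have
exponents of different parity, so the difference is `2` to the smaller exponent times an odd
number. Comparing gives `m + 1 = min (2t + 1) (2r)`, and `m > r ≥ 2` rules out `t ≤ 1`.
-/

namespace Int

lemma exists_odd_eq_two_pow_mul {n : ℤ} {m : ℕ} (h : 2 ^ m ∣ n) (h' : ¬ 2 ^ (m + 1) ∣ n) :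
    ∃ a, Odd a ∧ n = 2 ^ m * a := by
  obtain ⟨a, rfl⟩ := h
  refine ⟨a, Int.not_even_iff_odd.mp ?_, rfl⟩
  rintro ⟨b, rfl⟩
  exact h' ⟨b, by ring⟩

lemma eq_of_two_pow_mul_odd_eq {a b : ℕ} {u w : ℤ} (hu : Odd u) (hw : Odd w)
    (h : 2 ^ a * u = 2 ^ b * w) : a = b := by
  wlog hab : a ≤ b generalizing a b u w
  · exact (this hw hu h.symm (by omega)).symm
  obtain ⟨k, rfl⟩ := Nat.exists_eq_add_of_le hab
  have hu' : u = 2 ^ k * w := by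
    apply mul_left_cancel₀ (pow_ne_zero a two_ne_zero)
    rw [h]; ring
  rcases k with _ | k
  · rfl
  · exact absurd ⟨2 ^ k * w, by rw [hu']; ring⟩ (Int.not_even_iff_odd.mpr hu)

lemma exists_odd_two_pow_mul_sub_two_pow_mul {a b : ℕ} (hab : a ≠ b) {u w : ℤ}
    (hu : Odd u) (hw : Odd w) : ∃ v, Odd v ∧ 2 ^ a * u - 2 ^ b * w = 2 ^ min a b * v := by
  rcases Nat.lt_or_gt_of_ne hab with hlt | hgt
  · obtain ⟨k, rfl⟩ := Nat.exists_eq_add_of_lt hlt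
    refine ⟨u - 2 ^ (k + 1) * w, hu.sub_even ⟨2 ^ k * w, by ring⟩, ?_⟩
    rw [min_eq_left (by omega)]; ring
  · obtain ⟨k, rfl⟩ := Nat.exists_eq_add_of_lt hgt
    refine ⟨2 ^ (k + 1) * u - w, Even.sub_odd ⟨2 ^ k * u, by ring⟩ hw, ?_⟩
    rw [min_eq_right (by omega)]; ring

lemma exists_odd_two_pow_mul_mul_two_mul_sub {m : ℕ} (hm : 2 ≤ m) {a c : ℤ} (ha : Odd a)
    (hc : Odd c) : ∃ v, Odd v ∧ 2 ^ m * a * (2 * c - 2 ^ m * a) = 2 ^ (m + 1) * v := by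
  obtain ⟨k, rfl⟩ := Nat.exists_eq_add_of_le' hm
  exact ⟨a * (c - 2 ^ (k + 1) * a), ha.mul (hc.sub_even ⟨2 ^ k * a, by ring⟩), by ring⟩

end Int

theorem stmt_18_general (p : ℕ)
    (q c d d₀ x y y₀ : ℤ) (r t m : ℕ) (hq : Odd q)
    (hcd : (p : ℤ) = c ^ 2 + d ^ 2) (hxy : (p : ℤ) = x ^ 2 + 2 * q * y ^ 2)
    (hc : Odd c) (hd : d = 2 ^ r * d₀) (hd₀ : Odd d₀) (hr : 2 ≤ r)
    (hy : y = 2 ^ t * y₀) (hy₀ : Odd y₀)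
    (hm : (2 : ℤ) ^ m ∣ x + c) (hm' : ¬ (2 : ℤ) ^ (m + 1) ∣ x + c)
    (hmr : r < m) :
    m + 1 = min (2 * t + 1) (2 * r) ∧ m + 1 ≤ 2 * r ∧ 1 < t := by
  have hfactor : 2 * q * y ^ 2 - d ^ 2 = (x + c) * (2 * c - (x + c)) := by
    linear_combination hcd - hxy
  obtain ⟨a, ha, hxc⟩ := Int.exists_odd_eq_two_pow_mul hm hm'
  obtain ⟨v, hv, hright⟩ := Int.exists_odd_two_pow_mul_mul_two_mul_sub (m := m) (by omega) ha hc
  obtain ⟨w, hw, hleft⟩ := Int.exists_odd_two_pow_mul_sub_two_pow_mul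
    (show 2 * t + 1 ≠ 2 * r by omega) (hq.mul (hy₀.pow (n := 2))) (hd₀.pow (n := 2))
  have hval : m + 1 = min (2 * t + 1) (2 * r) := by
    refine Int.eq_of_two_pow_mul_odd_eq hv hw ?_
    rw [← hright, ← hleft, ← hxc, ← hfactor, hy, hd]
    ring
  exact ⟨hval, by omega, by omega⟩

theorem stmt_18 (p : ℕ) (hp : p.Prime) (hp8 : p % 8 = 1)
    (q c d d₀ x y y₀ : ℤ) (r t m : ℕ) (hq : Odd q) (hpq : ¬ (p : ℤ) ∣ q)
    (hcd : (p : ℤ) = c ^ 2 + d ^ 2) (hxy : (p : ℤ) = x ^ 2 + 2 * q * y ^ 2)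
    (hc : Odd c) (hd : d = 2 ^ r * d₀) (hd₀ : Odd d₀) (hr : 2 ≤ r)
    (hy : y = 2 ^ t * y₀) (hy₀ : Odd y₀) (ht : 1 ≤ t)
    (hm : (2 : ℤ) ^ m ∣ x + c) (hm' : ¬ (2 : ℤ) ^ (m + 1) ∣ x + c)
    (hmr : r < m) :
    m + 1 = min (2 * t + 1) (2 * r) ∧ m + 1 ≤ 2 * r ∧ 1 < t :=
  stmt_18_general p q c d d₀ x y y₀ r t m hq hcd hxy hc hd hd₀ hr hy hy₀ hm hm' hmr
end
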